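/- Set z := Z·J_n and C := J_n·Ξ (the bottom-left block of σ(X)). Then the blocks of σ(X) satisfy: A = s·1_n + zC, b·J_n = −2s·z − zCz, and Cz + (−J_n·Aᵀ·J_n) = −s·1_n. -/

import Mathlib

open Matrix BigOperators

noncomputable section

namespace Stmt11

/-! ### The polynomial ring `R` in the variables `z i j`, `ξ i j` (`i < j`), and `s` -/

abbrev Var (n : ℕ) := ({p : Fin n × Fin n // p.1 < p.2}) ⊕ (({p : Fin n × Fin n // p.1 < p.2}) ⊕ Unit)

abbrev R (n : ℕ) := MvPolynomial (Var n) ℂ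

def zv (n : ℕ) (i j : Fin n) : R n :=
  if h : i < j then MvPolynomial.X (Sum.inl ⟨(i, j), h⟩)
  else if h' : j < i then -MvPolynomial.X (Sum.inl ⟨(j, i), h'⟩)
  else 0

def xiv (n : ℕ) (i j : Fin n) : R n :=
  if h : i < j then MvPolynomial.X (Sum.inr (Sum.inl ⟨(i, j), h⟩))
  else if h' : j < i then -MvPolynomial.X (Sum.inr (Sum.inl ⟨(j, i), h'⟩))
  else 0

def sv (n : ℕ) : R n := MvPolynomial.X (Sum.inr (Sum.inr ()))

def Zmat (n : ℕ) : Matrix (Fin n) (Fin n) (R n) := Matrix.of fun i j => zv n i j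

def Ximat (n : ℕ) : Matrix (Fin n) (Fin n) (R n) := Matrix.of fun i j => xiv n i j

/-- `J_n`: ones on the antidiagonal -/
def Jmat (n : ℕ) : Matrix (Fin n) (Fin n) (R n) :=
  Matrix.of fun i j => if (i : ℕ) + (j : ℕ) + 1 = n then 1 else 0

/-- `A` with `A_{ij} := s·δ_{ij} − Σ_k z_{ki} ξ_{kj}` -/
def Amat (n : ℕ) : Matrix (Fin n) (Fin n) (R n) := Matrix.of fun i j =>
  (if i = j then sv n else 0) - ∑ k : Fin n, zv n k i * xiv n k j

/-- `b` (the given formula is alternating in `(i,j)`, so we use it for all `i, j`) -/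
def bmat (n : ℕ) : Matrix (Fin n) (Fin n) (R n) := Matrix.of fun i j =>
  -(2 * sv n * zv n i j) - ∑ k : Fin n, ∑ l : Fin n,
    if k < l then (zv n k i * zv n j l - zv n k j * zv n i l) * xiv n k l else 0

/-- `σ(X)` in `n × n` block form -/
def sigma (n : ℕ) : Matrix (Fin n ⊕ Fin n) (Fin n ⊕ Fin n) (R n) :=
  Matrix.fromBlocks (Amat n) (bmat n * Jmat n) (Jmat n * Ximat n)
    (-(Jmat n * (Amat n)ᵀ * Jmat n))

/-- `g := [[1, Z·J_n], [0, 1]]` -/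
def gmat (n : ℕ) : Matrix (Fin n ⊕ Fin n) (Fin n ⊕ Fin n) (R n) :=
  Matrix.fromBlocks 1 (Zmat n * Jmat n) 0 1

lemma zv_anti (n : ℕ) (i j : Fin n) : zv n i j = - zv n j i := by
  unfold zv
  rcases lt_trichotomy i j with h | h | h
  · simp [h, h.not_gt, ne_of_gt h]
  · simp [h, lt_irrefl]
  · simp [h, h.not_gt, ne_of_gt h]

lemma zv_self (n : ℕ) (i : Fin n) : zv n i i = 0 := by
  unfold zv; simp [lt_irrefl]

lemma xiv_anti (n : ℕ) (i j : Fin n) : xiv n i j = - xiv n j i := by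
  unfold xiv
  rcases lt_trichotomy i j with h | h | h
  · simp [h, h.not_gt, ne_of_gt h]
  · simp [h, lt_irrefl]
  · simp [h, h.not_gt, ne_of_gt h]

lemma xiv_self (n : ℕ) (i : Fin n) : xiv n i i = 0 := by
  unfold xiv; simp [lt_irrefl]

lemma Jmat_apply (n : ℕ) (i j : Fin n) :
    Jmat n i j = if j = Fin.rev i then 1 else 0 := by
  have h : ((i : ℕ) + (j : ℕ) + 1 = n) ↔ j = Fin.rev i := by
    rw [Fin.ext_iff, Fin.val_rev]
    omega
  simp [Jmat, h]

lemma Jmat_sq (n : ℕ) : Jmat n * Jmat n = 1 := by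
  ext i j
  rw [Matrix.mul_apply]
  simp only [Jmat_apply, Matrix.one_apply]
  rw [Finset.sum_eq_single (Fin.rev i)]
  · simp [Fin.rev_rev, eq_comm]
  · intro k _ hk
    simp [hk]
  · simp

lemma Amat_eq (n : ℕ) : Amat n = sv n • 1 + Zmat n * Ximat n := by
  ext i j
  simp only [Amat, Matrix.add_apply, Matrix.smul_apply, Matrix.one_apply, Matrix.mul_apply,
    Zmat, Ximat, Matrix.of_apply, smul_eq_mul, mul_ite, mul_one, mul_zero]
  have hs : ∑ k : Fin n, zv n k i * xiv n k j = -∑ k : Fin n, zv n i k * xiv n k j := by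
    rw [← Finset.sum_neg_distrib]
    exact Finset.sum_congr rfl fun k _ => by rw [zv_anti n k i]; ring
  rw [hs]; ring

lemma bmat_eq (n : ℕ) :
    bmat n = -((2 * sv n) • Zmat n) - Zmat n * Ximat n * Zmat n := by
  ext i j
  simp only [bmat, Matrix.sub_apply, Matrix.neg_apply, Matrix.smul_apply, Matrix.mul_apply,
    Zmat, Ximat, Matrix.of_apply, smul_eq_mul]
  have key : ∀ f : Fin n → Fin n → R n, (∀ k, f k k = 0) →
      ∑ k : Fin n, ∑ l : Fin n, f k l
        = ∑ k : Fin n, ∑ l : Fin n, if k < l then f k l + f l k else 0 := by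
    intro f hf
    have h1 : ∑ k : Fin n, ∑ l : Fin n, f k l
        = (∑ k : Fin n, ∑ l : Fin n, if k < l then f k l else 0)
          + ∑ k : Fin n, ∑ l : Fin n, if l < k then f k l else 0 := by
      rw [← Finset.sum_add_distrib]
      refine Finset.sum_congr rfl fun k _ => ?_
      rw [← Finset.sum_add_distrib]
      refine Finset.sum_congr rfl fun l _ => ?_
      rcases lt_trichotomy k l with h | h | h
      · simp [h, h.not_gt]
      · simp [h, lt_irrefl, hf]
      · simp [h, h.not_gt]
    have h2 : (∑ k : Fin n, ∑ l : Fin n, if l < k then f k l else 0)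
        = ∑ k : Fin n, ∑ l : Fin n, if k < l then f l k else 0 := by
      rw [Finset.sum_comm]
    rw [h1, h2, ← Finset.sum_add_distrib]
    refine Finset.sum_congr rfl fun k _ => ?_
    rw [← Finset.sum_add_distrib]
    refine Finset.sum_congr rfl fun l _ => ?_
    split <;> simp
  have hm : ∑ x : Fin n, (∑ x1 : Fin n, zv n i x1 * xiv n x1 x) * zv n x j
      = ∑ k : Fin n, ∑ l : Fin n, zv n i k * xiv n k l * zv n l j := by
    simp only [Finset.sum_mul]
    rw [Finset.sum_comm]
  have hfin : (∑ k : Fin n, ∑ l : Fin n,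
        if k < l then (zv n k i * zv n j l - zv n k j * zv n i l) * xiv n k l else 0)
      = ∑ k : Fin n, ∑ l : Fin n, zv n i k * xiv n k l * zv n l j := by
    rw [key (fun k l => zv n i k * xiv n k l * zv n l j) (fun k => by simp [xiv_self])]
    refine Finset.sum_congr rfl fun k _ => Finset.sum_congr rfl fun l _ => ?_
    split
    · rw [zv_anti n i k, zv_anti n l j, xiv_anti n l k]; ring
    · rfl
  rw [hm, hfin]

lemma C_eq (n : ℕ) : Ximat n * Zmat n - (Amat n)ᵀ = -(sv n • 1) := by
  ext i j
  simp only [Matrix.sub_apply, Matrix.mul_apply, Matrix.transpose_apply, Amat, Matrix.neg_apply,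
    Matrix.smul_apply, Matrix.one_apply, Zmat, Ximat, Matrix.of_apply, smul_eq_mul, mul_ite,
    mul_one, mul_zero]
  have hs : ∑ k : Fin n, xiv n i k * zv n k j = -∑ k : Fin n, zv n k j * xiv n k i := by
    rw [← Finset.sum_neg_distrib]
    exact Finset.sum_congr rfl fun k _ => by rw [xiv_anti n i k]; ring
  rw [hs]
  rcases eq_or_ne i j with h | h
  · subst h; simp only [if_pos rfl]; ring
  · rw [if_neg (Ne.symm h), if_neg h]; ring

lemma JJ_cancel (n : ℕ) (M N : Matrix (Fin n) (Fin n) (R n)) :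
    (M * Jmat n) * (Jmat n * N) = M * N := by
  rw [mul_assoc, ← mul_assoc (Jmat n), Jmat_sq, one_mul]

/-- With `z := Z·J_n` and `C := J_n·Ξ`, the blocks of `σ(X)` satisfy
`A = s·1 + zC`, `b·J_n = −2s·z − zCz`, and `Cz + (−J_n·Aᵀ·J_n) = −s·1`. -/
theorem blocks_sigma (n : ℕ) (hn : 1 ≤ n) :
    Amat n = sv n • 1 + (Zmat n * Jmat n) * (Jmat n * Ximat n) ∧
    bmat n * Jmat n =
      -((2 * sv n) • (Zmat n * Jmat n)) -
        (Zmat n * Jmat n) * (Jmat n * Ximat n) * (Zmat n * Jmat n) ∧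
    (Jmat n * Ximat n) * (Zmat n * Jmat n) + (-(Jmat n * (Amat n)ᵀ * Jmat n)) =
      -(sv n • 1) := by
  refine ⟨?_, ?_, ?_⟩
  · rw [Amat_eq, JJ_cancel]
  · rw [bmat_eq, JJ_cancel, sub_mul, neg_mul, Matrix.smul_mul,
      mul_assoc (Zmat n * Ximat n)]
  · have h3 : (Jmat n * Ximat n) * (Zmat n * Jmat n)
        = Jmat n * (Ximat n * Zmat n) * Jmat n := by
      simp only [mul_assoc]
    have h5 : Ximat n * Zmat n = -(sv n • 1) + (Amat n)ᵀ := by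
      rw [← C_eq]; abel
    have h4 : Jmat n * (-(sv n • (1 : Matrix (Fin n) (Fin n) (R n)))) * Jmat n
        = -(sv n • 1) := by
      rw [mul_neg, neg_mul, Matrix.mul_smul, Matrix.smul_mul, mul_one, Jmat_sq]
    rw [h3, h5, mul_add, add_mul, h4]
    abel

end Stmt11
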